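/- arXiv:2605.09306 — 2 statements merged into one kernel-verified Lean document; each statement's English description precedes it below -/
import Mathlib

section
/- Let $0<p<\infty$ and let $A,B$ be compact operators. If $A - B \in (\mathcal{L}_{p,\infty})_0$ and $\lim_{t\to\infty} t^{1/p}\mu(t,A) = c$, then $\lim_{t\to\infty} t^{1/p}\mu(t,B) = c$. -/
open Filter Topology ENNReal

variable {H : Type*} [NormedAddCommGroup H] [InnerProductSpace ℂ H] [CompleteSpace H]

/-- The singular value function `μ(t,T)`: the distance from `T` to operators of rank `≤ t`. -/
noncomputable def sv (T : H →L[ℂ] H) (t : ℝ) : ℝ :=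
  sInf {c : ℝ | ∃ R : H →L[ℂ] H, FiniteDimensional ℂ (LinearMap.range (R : H →ₗ[ℂ] H)) ∧
    (Module.finrank ℂ (LinearMap.range (R : H →ₗ[ℂ] H)) : ℝ) ≤ t ∧ c = ‖T - R‖}

/-- The weak Schatten quasinorm `‖T‖_{p,∞} = sup_{t ≥ 0} t^{1/p} μ(t,T)` (valued in `ℝ≥0∞`). -/
noncomputable def wnorm (p : ℝ) (T : H →L[ℂ] H) : ℝ≥0∞ :=
  ⨆ t : {t : ℝ // 0 ≤ t}, ENNReal.ofReal ((t : ℝ) ^ (1 / p) * sv T t)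

/-- The separable ideal `(𝓛_{p,∞})₀`: operators with `t^{1/p} μ(t,T) → 0` as `t → ∞`. -/
def zeroIdeal (p : ℝ) : Set (H →L[ℂ] H) :=
  {T | Tendsto (fun t : ℝ => t ^ (1 / p) * sv T t) atTop (𝓝 0)}

/-- The approximation set defining `sv`. -/
def svSet (T : H →L[ℂ] H) (t : ℝ) : Set ℝ :=
  {c : ℝ | ∃ R : H →L[ℂ] H, FiniteDimensional ℂ (LinearMap.range (R : H →ₗ[ℂ] H)) ∧
    (Module.finrank ℂ (LinearMap.range (R : H →ₗ[ℂ] H)) : ℝ) ≤ t ∧ c = ‖T - R‖}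

lemma sv_eq (T : H →L[ℂ] H) (t : ℝ) : sv T t = sInf (svSet T t) := rfl

lemma svSet_nonempty (T : H →L[ℂ] H) {t : ℝ} (ht : 0 ≤ t) : (svSet T t).Nonempty := by
  have h : LinearMap.range ((0 : H →L[ℂ] H) : H →ₗ[ℂ] H) = ⊥ := by
    rw [ContinuousLinearMap.coe_zero, LinearMap.range_zero]
  refine ⟨‖T‖, 0, ?_, ?_, by simp⟩
  · rw [h]; infer_instance
  · rw [h, finrank_bot]; simpa using ht

lemma svSet_bddBelow (T : H →L[ℂ] H) (t : ℝ) : BddBelow (svSet T t) := by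
  refine ⟨0, ?_⟩
  rintro c ⟨R, -, -, rfl⟩
  exact norm_nonneg _

lemma sv_nonneg (T : H →L[ℂ] H) (t : ℝ) : 0 ≤ sv T t := by
  apply Real.sInf_nonneg
  rintro c ⟨R, -, -, rfl⟩
  exact norm_nonneg _

lemma sv_add_le (S T : H →L[ℂ] H) {t s : ℝ} (ht : 0 ≤ t) (hs : 0 ≤ s) :
    sv (S + T) (t + s) ≤ sv S t + sv T s := by
  have key : ∀ c ∈ svSet S t, ∀ d ∈ svSet T s, sv (S + T) (t + s) ≤ c + d := by
    rintro c ⟨R, hR1, hR2, rfl⟩ d ⟨Q, hQ1, hQ2, rfl⟩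
    haveI := hR1; haveI := hQ1
    have hle : LinearMap.range ((R + Q : H →L[ℂ] H) : H →ₗ[ℂ] H) ≤
        LinearMap.range (R : H →ₗ[ℂ] H) ⊔ LinearMap.range (Q : H →ₗ[ℂ] H) := by
      rintro x ⟨y, rfl⟩
      exact Submodule.add_mem_sup ⟨y, rfl⟩ ⟨y, rfl⟩
    haveI : FiniteDimensional ℂ
        ↥(LinearMap.range (R : H →ₗ[ℂ] H) ⊔ LinearMap.range (Q : H →ₗ[ℂ] H)) :=
      Submodule.finiteDimensional_sup _ _
    haveI : FiniteDimensional ℂ (LinearMap.range ((R + Q : H →L[ℂ] H) : H →ₗ[ℂ] H)) :=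
      Submodule.finiteDimensional_of_le hle
    have hrk : (Module.finrank ℂ (LinearMap.range ((R + Q : H →L[ℂ] H) : H →ₗ[ℂ] H)) : ℝ)
        ≤ t + s := by
      have h1 := Submodule.finrank_mono (R := ℂ) (M := H) hle
      have h2 := Submodule.finrank_add_le_finrank_add_finrank
        (LinearMap.range (R : H →ₗ[ℂ] H)) (LinearMap.range (Q : H →ₗ[ℂ] H))
      have : (Module.finrank ℂ (LinearMap.range ((R + Q : H →L[ℂ] H) : H →ₗ[ℂ] H)) : ℝ) ≤
          (Module.finrank ℂ (LinearMap.range (R : H →ₗ[ℂ] H)) : ℝ) +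
          (Module.finrank ℂ (LinearMap.range (Q : H →ₗ[ℂ] H)) : ℝ) := by
        push_cast
        exact_mod_cast le_trans (Nat.cast_le.mpr h1) (Nat.cast_le.mpr h2)
      linarith
    have hmem : ‖(S + T) - (R + Q)‖ ∈ svSet (S + T) (t + s) := ⟨R + Q, this, hrk, rfl⟩
    calc sv (S + T) (t + s) ≤ ‖(S + T) - (R + Q)‖ := csInf_le (svSet_bddBelow _ _) hmem
      _ ≤ ‖S - R‖ + ‖T - Q‖ := by
          have : (S + T) - (R + Q) = (S - R) + (T - Q) := by abel
          rw [this]; exact norm_add_le _ _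
  have h1 : ∀ c ∈ svSet S t, sv (S + T) (t + s) - c ≤ sv T s := fun c hc =>
    le_csInf (svSet_nonempty T hs) (fun d hd => by linarith [key c hc d hd])
  have h2 : sv (S + T) (t + s) - sv T s ≤ sv S t :=
    le_csInf (svSet_nonempty S ht) (fun c hc => by linarith [h1 c hc])
  linarith

lemma sv_neg (T : H →L[ℂ] H) (t : ℝ) : sv (-T) t = sv T t := by
  rw [sv_eq, sv_eq]
  congr 1
  ext c
  constructor
  · rintro ⟨R, h1, h2, rfl⟩
    have h : LinearMap.range ((-R : H →L[ℂ] H) : H →ₗ[ℂ] H)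
        = LinearMap.range (R : H →ₗ[ℂ] H) := by
      rw [ContinuousLinearMap.coe_neg, LinearMap.range_neg]
    refine ⟨-R, ?_, ?_, ?_⟩
    · rw [h]; exact h1
    · rw [h]; exact h2
    · rw [show -T - R = -(T - -R) by abel, norm_neg]
  · rintro ⟨R, h1, h2, rfl⟩
    have h : LinearMap.range ((-R : H →L[ℂ] H) : H →ₗ[ℂ] H)
        = LinearMap.range (R : H →ₗ[ℂ] H) := by
      rw [ContinuousLinearMap.coe_neg, LinearMap.range_neg]
    refine ⟨-R, ?_, ?_, ?_⟩
    · rw [h]; exact h1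
    · rw [h]; exact h2
    · rw [show T - R = -(-T - -R) by abel, norm_neg]

/-- If `A - B ∈ (𝓛_{p,∞})₀` and `t^{1/p} μ(t,A) → c`, then `t^{1/p} μ(t,B) → c`. -/
theorem stmt3 (p : ℝ) (hp : 0 < p) (A B : H →L[ℂ] H)
    (hA : IsCompactOperator A) (hB : IsCompactOperator B)
    (hdiff : A - B ∈ zeroIdeal (H := H) p) (c : ℝ)
    (hlim : Tendsto (fun t : ℝ => t ^ (1 / p) * sv A t) atTop (𝓝 c)) :
    Tendsto (fun t : ℝ => t ^ (1 / p) * sv B t) atTop (𝓝 c) := by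
  set r : ℝ := 1 / p with hr_def
  have hr : 0 < r := by positivity
  have h0 : Tendsto (fun t : ℝ => t ^ r * sv (A - B) t) atTop (𝓝 0) := hdiff
  -- c is nonnegative
  have hc : 0 ≤ c := by
    refine ge_of_tendsto hlim ?_
    filter_upwards [eventually_ge_atTop (0 : ℝ)] with t ht
    exact mul_nonneg (Real.rpow_nonneg ht r) (sv_nonneg A t)
  rw [Metric.tendsto_atTop]
  intro ε hε
  -- choose b > 1 with b^r * c and b^(-r) * c within ε/4 of c
  have hcont : Tendsto (fun x : ℝ => x ^ r * c) (𝓝 1) (𝓝 c) := by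
    have h1 : ContinuousAt (fun x : ℝ => x ^ r) 1 :=
      Real.continuousAt_rpow_const 1 r (Or.inl one_ne_zero)
    have h2 : ContinuousAt (fun x : ℝ => x ^ r * c) 1 := h1.mul continuousAt_const
    simpa [ContinuousAt, Real.one_rpow] using h2
  have hcont' : Tendsto (fun x : ℝ => x ^ (-r) * c) (𝓝 1) (𝓝 c) := by
    have h1 : ContinuousAt (fun x : ℝ => x ^ (-r)) 1 :=
      Real.continuousAt_rpow_const 1 (-r) (Or.inl one_ne_zero)
    have h2 : ContinuousAt (fun x : ℝ => x ^ (-r) * c) 1 := h1.mul continuousAt_const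
    simpa [ContinuousAt, Real.one_rpow] using h2
  have hev : ∀ᶠ x in 𝓝[>] (1 : ℝ),
      |x ^ r * c - c| < ε / 4 ∧ |x ^ (-r) * c - c| < ε / 4 := by
    have e1 : ∀ᶠ x in 𝓝 (1 : ℝ), |x ^ r * c - c| < ε / 4 := by
      have := hcont (Metric.ball_mem_nhds c (by linarith : (0:ℝ) < ε / 4))
      filter_upwards [this] with x hx
      simpa [Real.dist_eq] using hx
    have e2 : ∀ᶠ x in 𝓝 (1 : ℝ), |x ^ (-r) * c - c| < ε / 4 := by
      have := hcont' (Metric.ball_mem_nhds c (by linarith : (0:ℝ) < ε / 4))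
      filter_upwards [this] with x hx
      simpa [Real.dist_eq] using hx
    exact ((e1.and e2).filter_mono nhdsWithin_le_nhds)
  obtain ⟨b, hb1, hbU, hbL⟩ : ∃ b : ℝ, 1 < b ∧ |b ^ r * c - c| < ε / 4 ∧
      |b ^ (-r) * c - c| < ε / 4 := by
    obtain ⟨b, hb⟩ := (hev.and self_mem_nhdsWithin).exists
    exact ⟨b, hb.2, hb.1.1, hb.1.2⟩
  have hb0 : 0 < b := by linarith
  have hb0' : b ≠ 0 := ne_of_gt hb0
  have hbm : 0 < b - 1 := by linarith
  -- rpow identities helper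
  have haux : ∀ a s : ℝ, 0 < a → 0 ≤ s → a ^ (-r) * (a * s) ^ r = s ^ r := by
    intro a s ha hs
    rw [Real.mul_rpow ha.le hs, Real.rpow_neg ha.le, ← mul_assoc,
      inv_mul_cancel₀ (Real.rpow_pos_of_pos ha r).ne', one_mul]
  have haux2 : ∀ a s : ℝ, 0 < a → 0 ≤ s → a ^ r * (s / a) ^ r = s ^ r := by
    intro a s ha hs
    rw [← Real.mul_rpow ha.le (div_nonneg hs ha.le), mul_div_cancel₀ _ (ne_of_gt ha)]
  -- upper bound function and its limit
  set g : ℝ → ℝ := fun t => t ^ r * sv A t with hg_def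
  set h : ℝ → ℝ := fun t => t ^ r * sv (A - B) t with hh_def
  have tend_div : Tendsto (fun s : ℝ => s / b) atTop atTop :=
    tendsto_id.atTop_div_const hb0
  have tend_mul : Tendsto (fun s : ℝ => (b - 1) * s / b) atTop atTop :=
    (tendsto_id.const_mul_atTop hbm).atTop_div_const hb0
  have tend_mul2 : Tendsto (fun s : ℝ => (b - 1) * s) atTop atTop :=
    tendsto_id.const_mul_atTop hbm
  have tend_mul3 : Tendsto (fun s : ℝ => b * s) atTop atTop :=
    tendsto_id.const_mul_atTop hb0
  have hU : Tendsto (fun s : ℝ => b ^ r * g (s / b) + (b / (b - 1)) ^ r * h ((b - 1) * s / b))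
      atTop (𝓝 (b ^ r * c + (b / (b - 1)) ^ r * 0)) :=
    ((hlim.comp tend_div).const_mul _).add ((h0.comp tend_mul).const_mul _)
  have hL : Tendsto (fun s : ℝ => b ^ (-r) * g (b * s) - (b - 1) ^ (-r) * h ((b - 1) * s))
      atTop (𝓝 (b ^ (-r) * c - (b - 1) ^ (-r) * 0)) :=
    ((hlim.comp tend_mul3).const_mul _).sub ((h0.comp tend_mul2).const_mul _)
  rw [mul_zero, add_zero] at hU
  rw [mul_zero, sub_zero] at hL
  -- eventual bounds from the limits
  have hUb : ∀ᶠ s in (atTop : Filter ℝ),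
      b ^ r * g (s / b) + (b / (b - 1)) ^ r * h ((b - 1) * s / b) < c + ε / 2 := by
    have : b ^ r * c < c + ε / 2 := by
      have := abs_lt.mp hbU
      linarith [this.2]
    filter_upwards [hU (Metric.ball_mem_nhds _ (by linarith : (0:ℝ) < c + ε / 2 - b ^ r * c))]
      with s hs
    simp only [Set.mem_preimage, Metric.mem_ball, Real.dist_eq] at hs
    have := abs_lt.mp hs
    linarith [this.2]
  have hLb : ∀ᶠ s in (atTop : Filter ℝ),
      c - ε / 2 < b ^ (-r) * g (b * s) - (b - 1) ^ (-r) * h ((b - 1) * s) := by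
    have : c - ε / 2 < b ^ (-r) * c := by
      have := abs_lt.mp hbL
      linarith [this.1]
    filter_upwards [hL (Metric.ball_mem_nhds _
      (by linarith : (0:ℝ) < b ^ (-r) * c - (c - ε / 2)))] with s hs
    simp only [Set.mem_preimage, Metric.mem_ball, Real.dist_eq] at hs
    have := abs_lt.mp hs
    linarith [this.1]
  -- pointwise inequalities
  have hptU : ∀ s : ℝ, 0 ≤ s → s ^ r * sv B s ≤
      b ^ r * g (s / b) + (b / (b - 1)) ^ r * h ((b - 1) * s / b) := by
    intro s hs
    have ht1 : (0:ℝ) ≤ s / b := div_nonneg hs hb0.le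
    have ht2 : (0:ℝ) ≤ (b - 1) * s / b := div_nonneg (mul_nonneg hbm.le hs) hb0.le
    have hsum : s / b + (b - 1) * s / b = s := by field_simp; ring
    have hsv : sv B s ≤ sv A (s / b) + sv (A - B) ((b - 1) * s / b) := by
      have := sv_add_le A (B - A) ht1 ht2
      rw [hsum] at this
      have hAB : A + (B - A) = B := by abel
      rw [hAB] at this
      calc sv B s ≤ sv A (s / b) + sv (B - A) ((b - 1) * s / b) := this
        _ = sv A (s / b) + sv (A - B) ((b - 1) * s / b) := by
            rw [show B - A = -(A - B) by abel, sv_neg]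
    have hmul : s ^ r * sv B s ≤ s ^ r * (sv A (s / b) + sv (A - B) ((b - 1) * s / b)) :=
      mul_le_mul_of_nonneg_left hsv (Real.rpow_nonneg hs r)
    have e1 : b ^ r * g (s / b) = s ^ r * sv A (s / b) := by
      rw [hg_def]; dsimp only
      rw [← mul_assoc, haux2 b s hb0 hs]
    have e2 : (b / (b - 1)) ^ r * h ((b - 1) * s / b) = s ^ r * sv (A - B) ((b - 1) * s / b) := by
      rw [hh_def]; dsimp only
      rw [← mul_assoc, ← Real.mul_rpow (div_nonneg hb0.le hbm.le) ht2]
      congr 2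
      field_simp
    rw [e1, e2]
    linarith [hmul]
  have hptL : ∀ s : ℝ, 0 ≤ s →
      b ^ (-r) * g (b * s) - (b - 1) ^ (-r) * h ((b - 1) * s) ≤ s ^ r * sv B s := by
    intro s hs
    have ht2 : (0:ℝ) ≤ (b - 1) * s := mul_nonneg hbm.le hs
    have hsv : sv A (b * s) ≤ sv B s + sv (A - B) ((b - 1) * s) := by
      have := sv_add_le B (A - B) hs ht2
      have hAB : B + (A - B) = A := by abel
      have hsum : s + (b - 1) * s = b * s := by ring
      rw [hAB, hsum] at this
      exact this
    have hmul : s ^ r * sv A (b * s) ≤ s ^ r * (sv B s + sv (A - B) ((b - 1) * s)) :=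
      mul_le_mul_of_nonneg_left hsv (Real.rpow_nonneg hs r)
    have e1 : b ^ (-r) * g (b * s) = s ^ r * sv A (b * s) := by
      rw [hg_def]; dsimp only
      rw [← mul_assoc, haux b s hb0 hs]
    have e2 : (b - 1) ^ (-r) * h ((b - 1) * s) = s ^ r * sv (A - B) ((b - 1) * s) := by
      rw [hh_def]; dsimp only
      rw [← mul_assoc, haux (b - 1) s hbm hs]
    rw [e1, e2]
    linarith [hmul]
  -- combine
  have final : ∀ᶠ s in (atTop : Filter ℝ), |s ^ r * sv B s - c| < ε := by
    filter_upwards [hUb, hLb, eventually_ge_atTop (0 : ℝ)] with s h1 h2 h3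
    have u := lt_of_le_of_lt (hptU s h3) h1
    have l := lt_of_lt_of_le h2 (hptL s h3)
    rw [abs_lt]
    constructor <;> linarith
  rw [eventually_atTop] at final
  obtain ⟨N, hN⟩ := final
  exact ⟨N, fun n hn => by rw [Real.dist_eq]; exact hN n hn⟩
end

section
/- Let $P \geq 0$ be a positive self-adjoint operator affiliated with a semifinite von Neumann algebra $(\mathcal{M},\tau)$ such that $e^{-tP} \in L_1(\mathcal{M},\tau)$ for all $t>0$ and $\tau(e^{-tP}) = t^{-D}\tau(e^{-P})$ for some $D > 0$ and all $t > 0$. Then for every $f \in L_1(\mathbb{R}_+, x^{D-1}dx)$ one has $f(P) \in L_1(\mathcal{M},\tau)$ and $\tau(f(P)) = \frac{1}{\Gamma(D)}\int_0^\infty x^{D-1}f(x)\,dx \cdot \tau(e^{-P})$. -/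
/-!
Weight `ν` by `e^{-x}` and transport it to `(0, 1]` along `x ↦ e^{-x}`: the result is a finite
measure whose `n`-th moment is the Laplace transform of `ν` at `n + 1`. By Euler's integral for
`Γ`, the scaling law makes these moments equal to those obtained in the same way from
`C / Γ(D) · x^{D-1} dx` on `(0, ∞)`, where `C = ∫ e^{-x} dν`. A finite measure on a compact
interval is determined by its moments (Weierstrass approximation), and the transport can be
undone, so `ν` is this explicit measure; the claim is then a computation with densities.
-/

open MeasureTheory

namespace MeasureTheory

open Set Real

variable {a b : ℝ} {μ ρ : Measure ℝ}

theorem Integrable.of_ae_mem_Icc [IsLocallyFiniteMeasure μ] (hμ : ∀ᵐ x ∂μ, x ∈ Icc a b)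
    {g : ℝ → ℝ} (hg : Continuous g) : Integrable g μ := by
  rw [← Measure.restrict_eq_self_of_ae_mem hμ]
  exact hg.integrableOn_Icc

theorem integral_eval_eq_of_forall_integral_pow_eq [IsFiniteMeasure μ] [IsFiniteMeasure ρ]
    (hμ : ∀ᵐ x ∂μ, x ∈ Icc a b) (hρ : ∀ᵐ x ∂ρ, x ∈ Icc a b)
    (h : ∀ n : ℕ, ∫ x, x ^ n ∂μ = ∫ x, x ^ n ∂ρ) (p : Polynomial ℝ) :
    ∫ x, p.eval x ∂μ = ∫ x, p.eval x ∂ρ := by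
  induction p using Polynomial.induction_on' with
  | add p q hp hq =>
    simp only [Polynomial.eval_add]
    rw [integral_add (Integrable.of_ae_mem_Icc hμ p.continuous)
        (Integrable.of_ae_mem_Icc hμ q.continuous),
      integral_add (Integrable.of_ae_mem_Icc hρ p.continuous)
        (Integrable.of_ae_mem_Icc hρ q.continuous), hp, hq]
  | monomial n c =>
    simp only [Polynomial.eval_monomial, integral_const_mul, h]

theorem abs_integral_sub_integral_le_of_ae_mem_Icc [IsFiniteMeasure μ]
    (hμ : ∀ᵐ x ∂μ, x ∈ Icc a b) {f g : ℝ → ℝ} (hf : Continuous f) (hg : Continuous g) {ε : ℝ}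
    (hfg : ∀ x ∈ Icc a b, |f x - g x| ≤ ε) :
    |∫ x, f x ∂μ - ∫ x, g x ∂μ| ≤ ε * μ.real univ := by
  rw [← integral_sub (Integrable.of_ae_mem_Icc hμ hf) (Integrable.of_ae_mem_Icc hμ hg)]
  refine norm_integral_le_of_norm_le_const (f := fun x => f x - g x) ?_
  filter_upwards [hμ] with x hx using hfg x hx

theorem integral_eq_of_forall_integral_pow_eq [IsFiniteMeasure μ] [IsFiniteMeasure ρ]
    (hμ : ∀ᵐ x ∂μ, x ∈ Icc a b) (hρ : ∀ᵐ x ∂ρ, x ∈ Icc a b)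
    (h : ∀ n : ℕ, ∫ x, x ^ n ∂μ = ∫ x, x ^ n ∂ρ) {g : ℝ → ℝ} (hg : Continuous g) :
    ∫ x, g x ∂μ = ∫ x, g x ∂ρ := by
  set M := μ.real univ + ρ.real univ + 1
  have hM : 0 < M := by positivity
  refine eq_of_forall_dist_le fun ε hε => ?_
  obtain ⟨p, hp⟩ := exists_polynomial_near_of_continuousOn a b g hg.continuousOn (ε / M)
    (by positivity)
  have hgp : ∀ x ∈ Icc a b, |g x - p.eval x| ≤ ε / M := fun x hx => by
    rw [abs_sub_comm]; exact (hp x hx).le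
  have hμp := abs_integral_sub_integral_le_of_ae_mem_Icc hμ hg p.continuous hgp
  have hρp := abs_integral_sub_integral_le_of_ae_mem_Icc hρ hg p.continuous hgp
  rw [integral_eval_eq_of_forall_integral_pow_eq hμ hρ h] at hμp
  calc dist (∫ x, g x ∂μ) (∫ x, g x ∂ρ)
      ≤ |∫ x, g x ∂μ - ∫ x, p.eval x ∂ρ| + |∫ x, g x ∂ρ - ∫ x, p.eval x ∂ρ| := by
        rw [Real.dist_eq, abs_sub_comm (∫ x, g x ∂ρ)]
        exact abs_sub_le _ _ _
    _ ≤ ε / M * μ.real univ + ε / M * ρ.real univ := add_le_add hμp hρp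
    _ ≤ ε := by
        rw [← mul_add, div_mul_eq_mul_div, div_le_iff₀ hM]; nlinarith

theorem Measure.ext_of_forall_integral_pow_eq [IsFiniteMeasure μ] [IsFiniteMeasure ρ]
    (hμ : ∀ᵐ x ∂μ, x ∈ Icc a b) (hρ : ∀ᵐ x ∂ρ, x ∈ Icc a b)
    (h : ∀ n : ℕ, ∫ x, x ^ n ∂μ = ∫ x, x ^ n ∂ρ) : μ = ρ :=
  ext_of_forall_integral_eq_of_IsFiniteMeasure fun g =>
    integral_eq_of_forall_integral_pow_eq hμ hρ h g.continuous

noncomputable def Measure.expNegPushforward (μ : Measure ℝ) : Measure ℝ :=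
  (μ.withDensity fun x => ENNReal.ofReal (exp (-x))).map fun x => exp (-x)

theorem isFiniteMeasure_expNegPushforward (h : Integrable (fun x => exp (-x)) μ) :
    IsFiniteMeasure μ.expNegPushforward :=
  have := isFiniteMeasure_withDensity_ofReal h.2
  Measure.isFiniteMeasure_map _ _

theorem ae_mem_Icc_expNegPushforward (hμ : ∀ᵐ x ∂μ, 0 ≤ x) :
    ∀ᵐ y ∂μ.expNegPushforward, y ∈ Icc (0 : ℝ) 1 := by
  refine (ae_map_iff (by fun_prop) measurableSet_Icc).2 ?_
  filter_upwards [(withDensity_absolutelyContinuous μ _).ae_le hμ] with x hx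
  exact ⟨(exp_pos _).le, exp_le_one_iff.2 (neg_nonpos.2 hx)⟩

theorem integral_pow_expNegPushforward (n : ℕ) :
    ∫ y, y ^ n ∂μ.expNegPushforward = ∫ x, exp (-((n + 1) * x)) ∂μ := by
  rw [Measure.expNegPushforward, integral_map (by fun_prop) (by fun_prop),
    integral_withDensity_eq_integral_toReal_smul (by fun_prop)
      (ae_of_all _ fun _ => ENNReal.ofReal_lt_top)]
  congr 1 with x
  rw [ENNReal.toReal_ofReal (exp_pos _).le, smul_eq_mul, ← exp_nat_mul, ← exp_add]
  congr 1
  ring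

theorem withDensity_map_neg_log_expNegPushforward (μ : Measure ℝ) :
    (μ.expNegPushforward.map fun y => -log y).withDensity
      (fun x => (ENNReal.ofReal (exp (-x)))⁻¹) = μ := by
  rw [Measure.expNegPushforward, Measure.map_map (by fun_prop) (by fun_prop)]
  simp only [Function.comp_def, log_exp, neg_neg, Measure.map_id']
  exact withDensity_inv_same (by fun_prop) (ae_of_all _ fun x => by simp [exp_pos])
    (ae_of_all _ fun _ => ENNReal.ofReal_ne_top)

theorem Measure.ext_of_forall_integral_exp_neg_mul_eq (hμ : ∀ᵐ x ∂μ, 0 ≤ x)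
    (hρ : ∀ᵐ x ∂ρ, 0 ≤ x) (hμi : Integrable (fun x => exp (-x)) μ)
    (hρi : Integrable (fun x => exp (-x)) ρ)
    (h : ∀ n : ℕ, ∫ x, exp (-((n + 1) * x)) ∂μ = ∫ x, exp (-((n + 1) * x)) ∂ρ) : μ = ρ := by
  have := isFiniteMeasure_expNegPushforward hμi
  have := isFiniteMeasure_expNegPushforward hρi
  have hpush : μ.expNegPushforward = ρ.expNegPushforward :=
    Measure.ext_of_forall_integral_pow_eq (ae_mem_Icc_expNegPushforward hμ)
      (ae_mem_Icc_expNegPushforward hρ) fun n => by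
        rw [integral_pow_expNegPushforward, integral_pow_expNegPushforward, h]
  rw [← withDensity_map_neg_log_expNegPushforward μ, hpush,
    withDensity_map_neg_log_expNegPushforward]

noncomputable def rpowMeasure (D : ℝ) : Measure ℝ :=
  (volume.restrict (Ioi 0)).withDensity fun x => ENNReal.ofReal (x ^ (D - 1))

variable {D : ℝ}

theorem integrable_rpowMeasure_iff {f : ℝ → ℝ} :
    Integrable f (rpowMeasure D) ↔ IntegrableOn (fun x => x ^ (D - 1) * f x) (Ioi 0) := by
  rw [rpowMeasure, integrable_withDensity_iff_integrable_smul' (by fun_prop)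
    (ae_of_all _ fun _ => ENNReal.ofReal_lt_top)]
  refine integrable_congr ?_
  filter_upwards [ae_restrict_mem measurableSet_Ioi] with x hx
  rw [ENNReal.toReal_ofReal (rpow_nonneg (le_of_lt hx) _), smul_eq_mul]

theorem integral_rpowMeasure (f : ℝ → ℝ) :
    ∫ x, f x ∂rpowMeasure D = ∫ x in Ioi 0, x ^ (D - 1) * f x := by
  rw [rpowMeasure, integral_withDensity_eq_integral_toReal_smul (by fun_prop)
    (ae_of_all _ fun _ => ENNReal.ofReal_lt_top)]
  refine integral_congr_ae ?_
  filter_upwards [ae_restrict_mem measurableSet_Ioi] with x hx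
  rw [ENNReal.toReal_ofReal (rpow_nonneg (le_of_lt hx) _), smul_eq_mul]

theorem ae_nonneg_rpowMeasure : ∀ᵐ x ∂rpowMeasure D, 0 ≤ x :=
  (withDensity_absolutelyContinuous _ _).ae_le <|
    (ae_restrict_mem measurableSet_Ioi).mono fun _ hx => le_of_lt hx

theorem integrable_exp_neg_rpowMeasure (hD : 0 < D) :
    Integrable (fun x => exp (-x)) (rpowMeasure D) := by
  rw [integrable_rpowMeasure_iff]
  simpa only [mul_comm] using GammaIntegral_convergent hD

theorem integral_exp_neg_mul_rpowMeasure (hD : 0 < D) {t : ℝ} (ht : 0 < t) :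
    ∫ x, exp (-(t * x)) ∂rpowMeasure D = Gamma D * t ^ (-D) := by
  rw [integral_rpowMeasure, integral_rpow_mul_exp_neg_mul_Ioi hD ht, one_div,
    inv_rpow ht.le, rpow_neg ht.le, mul_comm]

theorem eq_smul_rpowMeasure_of_integral_exp_neg_mul (hD : 0 < D) {ν : Measure ℝ}
    (hν : ∀ᵐ x ∂ν, 0 ≤ x) (hexp : Integrable (fun x => exp (-x)) ν)
    (hscal : ∀ t : ℝ, 0 < t → ∫ x, exp (-(t * x)) ∂ν = t ^ (-D) * ∫ x, exp (-x) ∂ν) :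
    ν = ENNReal.ofReal ((∫ x, exp (-x) ∂ν) / Gamma D) • rpowMeasure D := by
  refine Measure.ext_of_forall_integral_exp_neg_mul_eq hν
    (Measure.ae_smul_measure ae_nonneg_rpowMeasure _) hexp
    ((integrable_exp_neg_rpowMeasure hD).smul_measure ENNReal.ofReal_ne_top) fun n => ?_
  have hn : (0 : ℝ) < n + 1 := by positivity
  rw [hscal _ hn, integral_smul_measure, integral_exp_neg_mul_rpowMeasure hD hn,
    ENNReal.toReal_ofReal (by positivity), smul_eq_mul]
  field_simp [(Gamma_pos_of_pos hD).ne']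

end MeasureTheory

/-- `ν` is the spectral measure of `P` weighted by `τ`, so that `τ(f(P)) = ∫ f dν` and
`f(P) ∈ L₁(𝓜, τ)` means `Integrable f ν`. -/
theorem stmt11 (D : ℝ) (hD : 0 < D) (ν : Measure ℝ)
    (hsupp : ν (Set.Iio 0) = 0)
    (hexp : ∀ t : ℝ, 0 < t → Integrable (fun x => Real.exp (-(t * x))) ν)
    (hscal : ∀ t : ℝ, 0 < t →
      ∫ x, Real.exp (-(t * x)) ∂ν = t ^ (-D) * ∫ x, Real.exp (-x) ∂ν) :
    ∀ f : ℝ → ℝ, Measurable f →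
      Integrable (fun x => x ^ (D - 1) * f x) (volume.restrict (Set.Ioi 0)) →
      Integrable f ν ∧
        ∫ x, f x ∂ν =
          (1 / Real.Gamma D) * (∫ x in Set.Ioi (0:ℝ), x ^ (D - 1) * f x) *
            ∫ x, Real.exp (-x) ∂ν := by
  intro f _ hf
  set C := ∫ x, Real.exp (-x) ∂ν
  have hν : ν = ENNReal.ofReal (C / Real.Gamma D) • rpowMeasure D :=
    eq_smul_rpowMeasure_of_integral_exp_neg_mul hD
      (ae_iff.2 (measure_mono_null (fun _ => not_le.1) hsupp)) (by simpa using hexp 1 one_pos)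
      hscal
  refine ⟨hν ▸ (integrable_rpowMeasure_iff.2 hf).smul_measure ENNReal.ofReal_ne_top, ?_⟩
  rw [hν, integral_smul_measure, integral_rpowMeasure, ENNReal.toReal_ofReal (by positivity),
    smul_eq_mul]
  ring
end
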